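/- Let G be a finite abelian group of order q, H a subgroup of G, M a maximal proper subgroup of H, q̄ = |H|/|M|, T_H a transversal of H in G with fixed t_H ∈ T_H, T_M a transversal of M in H, and W̄ the induced channel on the cosets {t_H + t_M + M : t_M ∈ T_M}. For d ∈ H, define D_d(W̄) = (1/(2q̄))·Σ_{t_M∈T_M} Σ_{y∈Y} | W̄(y | t_H + t_M + M) − W̄(y | t_H + t_M + d + M) |, where t_H + t_M + d + M denotes the coset of M (within t_H + H) containing t_H + t_M + d. Then D_d(W̄) ≤ (2q / (q̄·|M|))·D_d(W). -/

import Mathlib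

open Finset

/-- `D_d(W) = (1/(2q))·Σ_{x∈G} Σ_{y∈Y} |W(y|x) − W(y|x+d)|`. -/
noncomputable def Dd {G Y : Type} [Fintype G] [Fintype Y] [Add G]
    (W : G → Y → ℝ) (d : G) : ℝ :=
  (1 / (2 * (Fintype.card G : ℝ))) * ∑ x : G, ∑ y : Y, |W x y - W (x + d) y|

/-- The induced channel `W̄` on cosets of `M` inside the coset `t_H + H`:
`W̄(y | t_H + t + M) = (1/|M|)·Σ_{m∈M} W(y | t_H + t + m)`. -/
noncomputable def inducedChannel {G Y : Type} [Fintype G] [AddCommGroup G] [DecidableEq G]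
    (W : G → Y → ℝ) (tH : G) (M : AddSubgroup G) [DecidablePred (· ∈ M)] :
    G → Y → ℝ :=
  fun t y => (1 / (Nat.card M : ℝ)) *
    ∑ m ∈ Finset.univ.filter (fun m : G => m ∈ M), W (tH + t + m) y

/-! Averaging over a coset of `M` can only shrink `Σ_y |·|`, and for `t ∈ T_M` the cosets
`t_H + t + M` are pairwise disjoint, so together they meet each input of `W` at most once. As `W̄`
is constant on cosets of `M`, `ρ (t + d)` may be replaced by `t + d`, whence
`Σ_{t ∈ T_M} Σ_y |W̄(y | t) − W̄(y | ρ (t + d))| ≤ 2q·D_d(W) / |M|`. -/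

theorem sum_sum_coset_le_sum_univ {G : Type} [Fintype G] [AddCommGroup G]
    [DecidableEq G] (f : G → ℝ) (hf : ∀ x, 0 ≤ f x) (M : AddSubgroup G)
    [DecidablePred (· ∈ M)] (T : Finset G) (hT : ∀ t ∈ T, ∀ t' ∈ T, t - t' ∈ M → t = t')
    (a : G) :
    ∑ t ∈ T, ∑ m ∈ univ.filter (· ∈ M), f (a + t + m) ≤ ∑ x, f x := by
  have hinj : Set.InjOn (fun p : G × G => a + p.1 + p.2)
      (T ×ˢ univ.filter (· ∈ M) : Finset _) := by
    rintro ⟨t, m⟩ hp ⟨t', m'⟩ hp' heq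
    simp only [coe_product, Set.mem_prod, mem_coe, mem_filter, mem_univ, true_and] at hp hp'
    have htm : t + m = t' + m' := by simpa only [add_assoc, add_right_inj] using heq
    have ht : t = t' := hT t hp.1 t' hp'.1 (by
      rw [show t - t' = m' - m by rw [sub_eq_sub_iff_add_eq_add, htm, add_comm]]
      exact M.sub_mem hp'.2 hp.2)
    subst ht
    simp [add_left_cancel htm]
  rw [← sum_product', ← sum_image hinj]
  exact sum_le_univ_sum_of_nonneg hf

section InducedChannel

variable {G Y : Type} [Fintype G] [AddCommGroup G] [DecidableEq G]

theorem inducedChannel_eq_of_sub_mem (W : G → Y → ℝ) (tH : G) (M : AddSubgroup G)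
    [DecidablePred (· ∈ M)] {t t' : G} (h : t - t' ∈ M) :
    inducedChannel W tH M t = inducedChannel W tH M t' := by
  funext y
  unfold inducedChannel
  congr 1
  refine sum_nbij' (· + (t - t')) (· - (t - t')) ?_ ?_ ?_ ?_ ?_
  · intro m hm
    simpa using M.add_mem (mem_filter.1 hm).2 h
  · intro m hm
    simpa using M.sub_mem (mem_filter.1 hm).2 h
  · simp
  · simp
  · intro m _
    congr 1
    abel

theorem sum_abs_inducedChannel_sub_le (W : G → Y → ℝ) (tH : G) (M : AddSubgroup G)
    [DecidablePred (· ∈ M)] [Fintype Y] (t d : G) :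
    ∑ y, |inducedChannel W tH M t y - inducedChannel W tH M (t + d) y| ≤
      1 / (Nat.card M : ℝ) * ∑ m ∈ univ.filter (· ∈ M), ∑ y,
        |W (tH + t + m) y - W (tH + t + m + d) y| := by
  have hshift : ∀ m, tH + (t + d) + m = tH + t + m + d := fun m => by abel
  calc ∑ y, |inducedChannel W tH M t y - inducedChannel W tH M (t + d) y|
      = ∑ y, 1 / (Nat.card M : ℝ) *
          |∑ m ∈ univ.filter (· ∈ M), (W (tH + t + m) y - W (tH + t + m + d) y)| := by
        simp only [inducedChannel, hshift, ← mul_sub, ← sum_sub_distrib, abs_mul,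
          abs_of_nonneg (by positivity : (0 : ℝ) ≤ 1 / (Nat.card M : ℝ))]
    _ ≤ ∑ y, 1 / (Nat.card M : ℝ) *
          ∑ m ∈ univ.filter (· ∈ M), |W (tH + t + m) y - W (tH + t + m + d) y| := by
        gcongr
        exact abs_sum_le_sum_abs _ _
    _ = _ := by rw [← mul_sum, sum_comm]

theorem sum_sum_abs_inducedChannel_sub_le (W : G → Y → ℝ) (tH : G) (M : AddSubgroup G)
    [DecidablePred (· ∈ M)] [Fintype Y] (TM : Finset G)
    (hT : ∀ t ∈ TM, ∀ t' ∈ TM, t - t' ∈ M → t = t') (ρ : G → G) (d : G)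
    (hρ : ∀ t ∈ TM, t + d - ρ (t + d) ∈ M) :
    ∑ t ∈ TM, ∑ y, |inducedChannel W tH M t y - inducedChannel W tH M (ρ (t + d)) y| ≤
      1 / (Nat.card M : ℝ) * ∑ x, ∑ y, |W x y - W (x + d) y| :=
  calc _ = ∑ t ∈ TM, ∑ y, |inducedChannel W tH M t y - inducedChannel W tH M (t + d) y| :=
        sum_congr rfl fun t ht => by rw [inducedChannel_eq_of_sub_mem W tH M (hρ t ht)]
    _ ≤ ∑ t ∈ TM, 1 / (Nat.card M : ℝ) * ∑ m ∈ univ.filter (· ∈ M), ∑ y,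
          |W (tH + t + m) y - W (tH + t + m + d) y| :=
        sum_le_sum fun t _ => sum_abs_inducedChannel_sub_le W tH M t d
    _ ≤ _ := by
        rw [← mul_sum]
        gcongr
        exact sum_sum_coset_le_sum_univ (fun x => ∑ y, |W x y - W (x + d) y|)
          (fun x => by positivity) M TM hT tH

end InducedChannel

theorem Dd_inducedChannel_le_general
    {G Y : Type} [Fintype G] [AddCommGroup G] [DecidableEq G] [Fintype Y]
    (W : G → Y → ℝ)
    (H M : AddSubgroup G) [DecidablePred (· ∈ M)]
    (tH : G)
    (TM : Finset G) (hTMsub : (TM : Set G) ⊆ (H : Set G))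
    (hTM : ∀ h ∈ H, ∃! t, t ∈ TM ∧ h - t ∈ M)
    (ρ : G → G) (hρ : ∀ h ∈ H, ρ h ∈ TM ∧ h - ρ h ∈ M)
    (d : G) (hd : d ∈ H) :
    (1 / (2 * ((Nat.card H : ℝ) / (Nat.card M : ℝ)))) *
        ∑ t ∈ TM, ∑ y : Y,
          |inducedChannel W tH M t y - inducedChannel W tH M (ρ (t + d)) y| ≤
      (2 * (Fintype.card G : ℝ) /
          (((Nat.card H : ℝ) / (Nat.card M : ℝ)) * (Nat.card M : ℝ))) * Dd W d := by
  have hH : (0 : ℝ) < Nat.card H := by exact_mod_cast Nat.card_pos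
  rw [Dd]
  set S := ∑ x : G, ∑ y : Y, |W x y - W (x + d) y|
  have hsum := sum_sum_abs_inducedChannel_sub_le W tH M TM
    (fun t ht t' ht' htt' => (hTM t (hTMsub ht)).unique ⟨ht, by simp⟩ ⟨ht', htt'⟩) ρ d
    (fun t ht => (hρ _ (H.add_mem (hTMsub ht) hd)).2)
  have hS : 0 ≤ S := by positivity
  calc _ ≤ 1 / (2 * ((Nat.card H : ℝ) / Nat.card M)) * (1 / Nat.card M * S) := by gcongr
    _ = S / (2 * Nat.card H) := by field_simp
    _ ≤ S / Nat.card H := by gcongr; linarith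
    _ = _ := by field_simp

/-- `D_d(W̄) ≤ (2q/(q̄·|M|))·D_d(W)` for the induced channel `W̄`,
where `ρ` picks the representative in `T_M` of the coset of `M` (within `H`)
containing its argument. -/
theorem Dd_inducedChannel_le
    {G Y : Type} [Fintype G] [AddCommGroup G] [DecidableEq G] [Fintype Y]
    (W : G → Y → ℝ) (hW0 : ∀ x y, 0 ≤ W x y) (hW1 : ∀ x, ∑ y, W x y = 1)
    (H M : AddSubgroup G) [DecidablePred (· ∈ M)]
    (hMH : M < H)
    (hMmax : ∀ K : AddSubgroup G, M ≤ K → K ≤ H → K = M ∨ K = H)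
    (TH : Finset G) (hTH : ∀ g : G, ∃! t, t ∈ TH ∧ g - t ∈ H) (tH : G) (htH : tH ∈ TH)
    (TM : Finset G) (hTMsub : (TM : Set G) ⊆ (H : Set G))
    (hTM : ∀ h ∈ H, ∃! t, t ∈ TM ∧ h - t ∈ M)
    (ρ : G → G) (hρ : ∀ h ∈ H, ρ h ∈ TM ∧ h - ρ h ∈ M)
    (d : G) (hd : d ∈ H) :
    (1 / (2 * ((Nat.card H : ℝ) / (Nat.card M : ℝ)))) *
        ∑ t ∈ TM, ∑ y : Y,
          |inducedChannel W tH M t y - inducedChannel W tH M (ρ (t + d)) y| ≤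
      (2 * (Fintype.card G : ℝ) /
          (((Nat.card H : ℝ) / (Nat.card M : ℝ)) * (Nat.card M : ℝ))) * Dd W d :=
  Dd_inducedChannel_le_general W H M tH TM hTMsub hTM ρ hρ d hd
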